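/- arXiv:2008.10110 — 7 statements merged into one kernel-verified Lean document; each statement's English description precedes it below -/
import Mathlib

section
/- Let G be a Weil-adapted Hausdorff topological group and let S be a subsemigroup of G. If S has a conditionally inner point, then S is a closed subgroup of G (i.e., S is closed in G, contains inverses of all its elements, and contains the identity). -/
/-! If `x ∈ closure S ∩ U ⊆ S` and `closure S` is a subgroup `H`, then for `y ∈ H` the set of
`g` with `y * g⁻¹ ∈ U` is an open neighbourhood of `x⁻¹ * y ∈ H = closure S`, so it contains
some `s ∈ S`. Then `y * s⁻¹ ∈ H ∩ U ⊆ S`, and `y = (y * s⁻¹) * s ∈ S`. Hence `S = H`. -/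

theorem closure_subset_of_closure_eq_subgroup {G : Type*} [Group G] [TopologicalSpace G]
    [IsTopologicalGroup G] {S : Set G} (hmul : ∀ a ∈ S, ∀ b ∈ S, a * b ∈ S)
    {H : Subgroup G} (hH : closure S = H) {x : G} {U : Set G} (hU : IsOpen U)
    (hx : x ∈ closure S ∩ U) (hsub : closure S ∩ U ⊆ S) : closure S ⊆ S := by
  intro y hy
  rw [hH] at hx hy hsub
  have hO : IsOpen ((fun g => y * g⁻¹) ⁻¹' U) := hU.preimage (by fun_prop)
  have hxy : x⁻¹ * y ∈ closure S := hH ▸ H.mul_mem (H.inv_mem hx.1) hy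
  obtain ⟨s, hsO, hsS⟩ := mem_closure_iff.mp hxy _ hO (by simpa using hx.2)
  have hsH : s ∈ H := SetLike.mem_coe.mp (hH ▸ subset_closure hsS)
  simpa using hmul _ (hsub ⟨H.mul_mem hy (H.inv_mem hsH), hsO⟩) _ hsS

theorem stmt_0_general {G : Type*} [Group G] [TopologicalSpace G] [IsTopologicalGroup G]
    (hWeil : ∀ S : Set G, S.Nonempty → (∀ a ∈ S, ∀ b ∈ S, a * b ∈ S) →
      ∃ H : Subgroup G, closure S = (H : Set G))
    (S : Set G) (hne : S.Nonempty) (hmul : ∀ a ∈ S, ∀ b ∈ S, a * b ∈ S)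
    (hcip : ∃ x ∈ S, ∃ U : Set G, IsOpen U ∧ x ∈ closure S ∩ U ∧
      closure S ∩ U ⊆ S) :
    IsClosed S ∧ (∀ a ∈ S, a⁻¹ ∈ S) ∧ (1 : G) ∈ S := by
  obtain ⟨H, hH⟩ := hWeil S hne hmul
  obtain ⟨x, -, U, hU, hx, hsub⟩ := hcip
  have hS : closure S = S :=
    (closure_subset_of_closure_eq_subgroup hmul hH hU hx hsub).antisymm subset_closure
  have hSH : S = H := hS.symm.trans hH
  refine ⟨hS ▸ isClosed_closure, ?_, ?_⟩
  · intro a ha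
    rw [hSH] at ha ⊢
    exact H.inv_mem ha
  · rw [hSH]
    exact H.one_mem

/-- A Weil-adapted Hausdorff topological group: the closure of every
subsemigroup is a subgroup.  A subsemigroup with a conditionally inner point
is a closed subgroup. -/
theorem stmt_0 {G : Type*} [Group G] [TopologicalSpace G] [IsTopologicalGroup G]
    [T2Space G]
    (hWeil : ∀ S : Set G, S.Nonempty → (∀ a ∈ S, ∀ b ∈ S, a * b ∈ S) →
      ∃ H : Subgroup G, closure S = (H : Set G))
    (S : Set G) (hne : S.Nonempty) (hmul : ∀ a ∈ S, ∀ b ∈ S, a * b ∈ S)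
    (hcip : ∃ x ∈ S, ∃ U : Set G, IsOpen U ∧ x ∈ closure S ∩ U ∧
      closure S ∩ U ⊆ S) :
    IsClosed S ∧ (∀ a ∈ S, a⁻¹ ∈ S) ∧ (1 : G) ∈ S :=
  stmt_0_general hWeil S hne hmul hcip
end

section
/- For a Hausdorff topological group G the following conditions are equivalent: (i) the closure of every subsemigroup of G is a subgroup of G; (ii) every closed subsemigroup of G is a subgroup of G; (iii) for every g ∈ G, the closure of the set {g, g², g³, …} of positive powers of g is a subgroup of G. -/
/-! The closure of a subsemigroup is again a subsemigroup, so (i) and (ii) say the same thing, and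
(ii) gives (iii) because the positive powers of `g` form a subsemigroup. Conversely, if `S` is a
closed subsemigroup and `g ∈ S`, the closure of the positive powers of `g` lies in `S`; by (iii) it
is a subgroup, so it contains `g⁻¹`. Hence `S` is closed under inversion, i.e. a subgroup. -/

lemma mul_mem_closure_of_mul_mem {M : Type*} [Mul M] [TopologicalSpace M] [ContinuousMul M]
    {S : Set M} (hS : ∀ a ∈ S, ∀ b ∈ S, a * b ∈ S) :
    ∀ a ∈ closure S, ∀ b ∈ closure S, a * b ∈ closure S :=
  fun _ ha _ hb => map_mem_closure₂ continuous_mul ha hb hS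

lemma exists_subgroup_eq_of_mul_mem_of_inv_mem {G : Type*} [Group G] {S : Set G}
    (hne : S.Nonempty) (hmul : ∀ a ∈ S, ∀ b ∈ S, a * b ∈ S) (hinv : ∀ a ∈ S, a⁻¹ ∈ S) :
    ∃ H : Subgroup G, S = (H : Set G) := by
  obtain ⟨g, hg⟩ := hne
  have hone : (1 : G) ∈ S := mul_inv_cancel g ▸ hmul g hg g⁻¹ (hinv g hg)
  exact ⟨{ carrier := S
           mul_mem' := fun ha hb => hmul _ ha _ hb
           one_mem' := hone
           inv_mem' := fun ha => hinv _ ha }, rfl⟩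

section PositivePowers

variable {M : Type*} [Monoid M]

lemma nonempty_positivePowers (g : M) : {x : M | ∃ n : ℕ, 0 < n ∧ x = g ^ n}.Nonempty :=
  ⟨g, 1, one_pos, (pow_one g).symm⟩

lemma mul_mem_positivePowers (g : M) :
    ∀ a ∈ {x : M | ∃ n : ℕ, 0 < n ∧ x = g ^ n}, ∀ b ∈ {x : M | ∃ n : ℕ, 0 < n ∧ x = g ^ n},
      a * b ∈ {x : M | ∃ n : ℕ, 0 < n ∧ x = g ^ n} := by
  rintro _ ⟨n, hn, rfl⟩ _ ⟨m, -, rfl⟩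
  exact ⟨n + m, by omega, (pow_add g n m).symm⟩

lemma positivePowers_subset {S : Set M} (hmul : ∀ a ∈ S, ∀ b ∈ S, a * b ∈ S) {g : M}
    (hg : g ∈ S) : {x : M | ∃ n : ℕ, 0 < n ∧ x = g ^ n} ⊆ S := by
  rintro _ ⟨n, hn, rfl⟩
  induction n, hn using Nat.le_induction with
  | base => simpa using hg
  | succ k _ ih => exact pow_succ g k ▸ hmul _ ih _ hg

end PositivePowers

lemma inv_mem_of_closure_positivePowers_eq_subgroup {G : Type*} [Group G] [TopologicalSpace G]
    {S : Set G} (hmul : ∀ a ∈ S, ∀ b ∈ S, a * b ∈ S) (hS : IsClosed S) {g : G} (hg : g ∈ S)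
    {H : Subgroup G} (hH : closure {x : G | ∃ n : ℕ, 0 < n ∧ x = g ^ n} = (H : Set G)) :
    g⁻¹ ∈ S := by
  have hHS : (H : Set G) ⊆ S := hH ▸ closure_minimal (positivePowers_subset hmul hg) hS
  have hgH : g ∈ H := by
    rw [← SetLike.mem_coe, ← hH]
    exact subset_closure ⟨1, one_pos, (pow_one g).symm⟩
  exact hHS (H.inv_mem hgH)

theorem stmt_3_general {G : Type*} [Group G] [TopologicalSpace G] [IsTopologicalGroup G] :
    List.TFAE
      [∀ S : Set G, S.Nonempty → (∀ a ∈ S, ∀ b ∈ S, a * b ∈ S) →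
          ∃ H : Subgroup G, closure S = (H : Set G),
        ∀ S : Set G, S.Nonempty → (∀ a ∈ S, ∀ b ∈ S, a * b ∈ S) → IsClosed S →
          ∃ H : Subgroup G, S = (H : Set G),
        ∀ g : G, ∃ H : Subgroup G,
          closure {x : G | ∃ n : ℕ, 0 < n ∧ x = g ^ n} = (H : Set G)] := by
  tfae_have 1 → 2 := fun h1 S hne hmul hS => hS.closure_eq ▸ h1 S hne hmul
  tfae_have 2 → 1 := fun h2 S hne hmul =>
    h2 _ hne.closure (mul_mem_closure_of_mul_mem hmul) isClosed_closure
  tfae_have 2 → 3 := fun h2 g =>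
    h2 _ (nonempty_positivePowers g).closure
      (mul_mem_closure_of_mul_mem (mul_mem_positivePowers g)) isClosed_closure
  tfae_have 3 → 2 := fun h3 S hne hmul hS =>
    exists_subgroup_eq_of_mul_mem_of_inv_mem hne hmul fun g hg =>
      inv_mem_of_closure_positivePowers_eq_subgroup hmul hS hg (h3 g).choose_spec
  tfae_finish

/-- For a Hausdorff topological group `G` the following are equivalent:
(i) the closure of every subsemigroup of `G` is a subgroup;
(ii) every closed subsemigroup of `G` is a subgroup;
(iii) for every `g ∈ G` the closure of `{g, g², g³, …}` is a subgroup. -/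
theorem stmt_3 {G : Type*} [Group G] [TopologicalSpace G] [IsTopologicalGroup G]
    [T2Space G] :
    List.TFAE
      [∀ S : Set G, S.Nonempty → (∀ a ∈ S, ∀ b ∈ S, a * b ∈ S) →
          ∃ H : Subgroup G, closure S = (H : Set G),
        ∀ S : Set G, S.Nonempty → (∀ a ∈ S, ∀ b ∈ S, a * b ∈ S) → IsClosed S →
          ∃ H : Subgroup G, S = (H : Set G),
        ∀ g : G, ∃ H : Subgroup G,
          closure {x : G | ∃ n : ℕ, 0 < n ∧ x = g ^ n} = (H : Set G)] :=
  stmt_3_general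
end

section
/- Every precompact Hausdorff topological group is Weil-adapted, i.e., if G is a Hausdorff topological group whose group uniformity is totally bounded, then the closure in G of every subsemigroup of G is a subgroup of G. -/
/-!
Let `a` lie in a subsemigroup `S` of a precompact group. Covering `G` by finitely many translates
`y • V` of a small neighbourhood `V` of `1`, two powers `a ^ i`, `a ^ j` with `i < j` fall into
the same translate, so `a ^ (j - i)` is close to `1`. Doing this for `a ^ 2` shows that `a⁻¹` is
approximated by the odd powers `a ^ (2m + 1) ∈ S`, so `closure S` is closed under inversion and
hence a subgroup.
-/

open Filter Set Topology Pointwise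

theorem Subsemigroup.pow_succ_mem {M : Type*} [Monoid M] {T : Subsemigroup M} {a : M}
    (ha : a ∈ T) (n : ℕ) : a ^ (n + 1) ∈ T := by
  induction n with
  | zero => simpa using ha
  | succ n ih => rw [pow_succ]; exact T.mul_mem ih ha

section UniformGroup

variable {G : Type*} [Group G] [UniformSpace G] [IsUniformGroup G]

theorem exists_pos_pow_mem_of_totallyBounded {a : G}
    (ha : TotallyBounded (range (a ^ · : ℕ → G))) {U : Set G} (hU : U ∈ 𝓝 1) :
    ∃ k, 0 < k ∧ a ^ k ∈ U := by
  obtain ⟨V, hV, hVU⟩ := exists_nhds_split_inv hU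
  obtain ⟨t, ht, hcover⟩ :=
    totallyBounded_iff_subset_finite_iUnion_nhds_one.mp ha V⁻¹ (inv_mem_nhds_one G hV)
  have hy : ∀ n : ℕ, ∃ y ∈ t, a ^ n ∈ y • V⁻¹ := fun n => by
    simpa only [exists_prop] using mem_iUnion₂.mp (hcover (mem_range_self n))
  choose y hyt hy using hy
  obtain ⟨i, j, hij, hyij⟩ := ht.exists_lt_map_eq_of_forall_mem hyt
  obtain ⟨k, rfl⟩ := Nat.exists_eq_add_of_lt hij
  obtain ⟨v, hv, hvi⟩ : ∃ v ∈ V⁻¹, y i * v = a ^ i := hy i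
  obtain ⟨w, hw, hwj⟩ : ∃ w ∈ V⁻¹, y i * w = a ^ (i + k + 1) := hyij ▸ hy (i + k + 1)
  refine ⟨k + 1, k.succ_pos, ?_⟩
  have hpow : a ^ (k + 1) = (a ^ i)⁻¹ * a ^ (i + k + 1) := by
    rw [add_assoc, pow_add a i, inv_mul_cancel_left]
  rw [hpow, ← hvi, ← hwj, mul_inv_rev, mul_assoc, inv_mul_cancel_left, ← div_inv_eq_mul]
  exact hVU _ hv _ hw

theorem Subsemigroup.inv_mem_topologicalClosure_of_totallyBounded (T : Subsemigroup G) {a : G}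
    (haT : a ∈ T) (ha : TotallyBounded (range (a ^ · : ℕ → G))) :
    a⁻¹ ∈ T.topologicalClosure := by
  refine mem_closure_iff_nhds.mpr fun N (hN : N ∈ 𝓝 a⁻¹) => ?_
  have haN : a • N ∈ 𝓝 (1 : G) := by simpa using smul_mem_nhds_smul a hN
  have ha2 : TotallyBounded (range ((a ^ 2) ^ · : ℕ → G)) :=
    ha.subset <| range_subset_iff.mpr fun n => mem_range.mpr ⟨2 * n, pow_mul a 2 n⟩
  obtain ⟨k, hk, hkN⟩ := exists_pos_pow_mem_of_totallyBounded ha2 haN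
  obtain ⟨m, rfl⟩ := Nat.exists_eq_add_one.mpr hk
  have hodd : (a ^ 2) ^ (m + 1) = a • a ^ (2 * m + 1) := by
    rw [smul_eq_mul, ← pow_succ', ← pow_mul]; ring_nf
  rw [hodd, smul_mem_smul_set_iff] at hkN
  exact ⟨a ^ (2 * m + 1), hkN, T.pow_succ_mem haT (2 * m)⟩

end UniformGroup

theorem stmt_5_general {G : Type*} [Group G] [UniformSpace G] [IsUniformGroup G]
    (hpre : TotallyBounded (Set.univ : Set G)) :
    ∀ S : Set G, S.Nonempty → (∀ a ∈ S, ∀ b ∈ S, a * b ∈ S) →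
      ∃ H : Subgroup G, closure S = (H : Set G) := by
  intro S hS hmul
  let T : Subsemigroup G := ⟨S, fun ha hb => hmul _ ha _ hb⟩
  have hSinv : S⁻¹ ⊆ closure S := fun a ha =>
    inv_inv a ▸ T.inv_mem_topologicalClosure_of_totallyBounded ha (hpre.subset (subset_univ _))
  have hinv : ∀ a ∈ closure S, a⁻¹ ∈ closure S := fun a ha =>
    closure_minimal hSinv isClosed_closure (by rwa [← inv_closure, Set.mem_inv, inv_inv])
  exact ⟨Subgroup.ofDiv (closure S) hS.closure fun x hx y hy =>
    T.topologicalClosure.mul_mem hx (hinv y hy), rfl⟩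

/-- Every precompact Hausdorff topological group (a group with its group
uniformity totally bounded) is Weil-adapted: the closure of every
subsemigroup is a subgroup. -/
theorem stmt_5 {G : Type*} [Group G] [UniformSpace G] [IsUniformGroup G]
    [T2Space G] (hpre : TotallyBounded (Set.univ : Set G)) :
    ∀ S : Set G, S.Nonempty → (∀ a ∈ S, ∀ b ∈ S, a * b ∈ S) →
      ∃ H : Subgroup G, closure S = (H : Set G) :=
  stmt_5_general hpre
end

section
/- Every open subsemigroup of a precompact Hausdorff topological group is a subgroup. -/
/-!
By total boundedness and pigeonhole, every neighbourhood of `1` contains a positive power of any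
given element `a`. For `a` in the open semigroup `S` this puts `a ^ (1 - k) ∈ S` for some
large `k`, and then `a⁻¹ = a ^ (k - 2) * a ^ (1 - k) ∈ S`.
-/

open Filter Set Topology Pointwise

theorem exists_pow_mem_of_totallyBounded {G : Type*} [Group G] [UniformSpace G]
    [IsUniformGroup G] (hG : TotallyBounded (univ : Set G)) (a : G) {V : Set G}
    (hV : V ∈ 𝓝 (1 : G)) : ∃ k, 0 < k ∧ a ^ k ∈ V := by
  obtain ⟨W, hW, -, hW_inv, hWV⟩ := exists_closed_nhds_one_inv_eq_mul_subset hV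
  obtain ⟨t, ht, hcover⟩ := totallyBounded_iff_subset_finite_iUnion_nhds_one.1 hG W hW
  choose y hyt hy using fun n : ℕ => mem_iUnion₂.1 (hcover (mem_univ (a ^ n)))
  obtain ⟨m, n, hmn, hymn⟩ := ht.exists_lt_map_eq_of_forall_mem hyt
  obtain ⟨u, hu, hum⟩ := mem_smul_set.1 (hy m)
  obtain ⟨w, hw, hwn⟩ := mem_smul_set.1 (hy n)
  have hpow : a ^ (n - m) = (a ^ m)⁻¹ * a ^ n := by
    rw [eq_inv_mul_iff_mul_eq, ← pow_add, Nat.add_sub_cancel' hmn.le]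
  refine ⟨n - m, Nat.sub_pos_of_lt hmn, hWV ?_⟩
  rw [hpow, ← hum, ← hwn, hymn, smul_eq_mul, smul_eq_mul, mul_inv_rev, mul_assoc,
    inv_mul_cancel_left]
  exact mul_mem_mul (hW_inv ▸ inv_mem_inv.2 hu) hw

theorem pow_succ_mem_of_mul_mem {M : Type*} [Monoid M] {S : Set M}
    (hmul : ∀ a ∈ S, ∀ b ∈ S, a * b ∈ S) {a : M} (ha : a ∈ S) (n : ℕ) :
    a ^ (n + 1) ∈ S := by
  induction n with
  | zero => simpa using ha
  | succ n ih => exact pow_succ a (n + 1) ▸ hmul _ ih _ ha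

theorem inv_mem_of_isOpen_of_totallyBounded {G : Type*} [Group G] [UniformSpace G]
    [IsUniformGroup G] (hG : TotallyBounded (univ : Set G)) {S : Set G}
    (hmul : ∀ a ∈ S, ∀ b ∈ S, a * b ∈ S) (hS : IsOpen S) {a : G} (ha : a ∈ S) :
    a⁻¹ ∈ S := by
  have hV : (fun x => x⁻¹ * a) ⁻¹' S ∈ 𝓝 (1 : G) :=
    (continuous_inv.mul continuous_const).continuousAt.preimage_mem_nhds
      (by simpa using hS.mem_nhds ha)
  -- With `k` a positive multiple of `3`, the exponent `k - 2` in
  -- `a⁻¹ = a ^ (k - 2) * ((a ^ k)⁻¹ * a)` is positive.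
  obtain ⟨k, hk, hak⟩ := exists_pow_mem_of_totallyBounded hG (a ^ 3) hV
  obtain ⟨j, rfl⟩ := Nat.exists_eq_add_one_of_ne_zero hk.ne'
  have hinv_eq : a⁻¹ = a ^ (3 * j + 1) * (((a ^ 3) ^ (j + 1))⁻¹ * a) := by group
  rw [hinv_eq]
  exact hmul _ (pow_succ_mem_of_mul_mem hmul ha _) _ hak

theorem stmt_7_general {G : Type*} [Group G] [UniformSpace G] [IsUniformGroup G]
    (hpre : TotallyBounded (Set.univ : Set G))
    (S : Set G) (hne : S.Nonempty) (hmul : ∀ a ∈ S, ∀ b ∈ S, a * b ∈ S)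
    (hopen : IsOpen S) :
    ∃ H : Subgroup G, S = (H : Set G) := by
  have hinv {a : G} (ha : a ∈ S) : a⁻¹ ∈ S :=
    inv_mem_of_isOpen_of_totallyBounded hpre hmul hopen ha
  obtain ⟨a, ha⟩ := hne
  have hone : (1 : G) ∈ S := mul_inv_cancel a ▸ hmul a ha a⁻¹ (hinv ha)
  exact ⟨{ carrier := S
           mul_mem' := fun hx hy => hmul _ hx _ hy
           one_mem' := hone
           inv_mem' := hinv }, rfl⟩

/-- Every open subsemigroup of a precompact Hausdorff topological group is a
subgroup. -/
theorem stmt_7 {G : Type*} [Group G] [UniformSpace G] [IsUniformGroup G]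
    [T2Space G] (hpre : TotallyBounded (Set.univ : Set G))
    (S : Set G) (hne : S.Nonempty) (hmul : ∀ a ∈ S, ∀ b ∈ S, a * b ∈ S)
    (hopen : IsOpen S) :
    ∃ H : Subgroup G, S = (H : Set G) :=
  stmt_7_general hpre S hne hmul hopen
end

section
/- Let G be a Weil-adapted Hausdorff topological group and let S be a subsemigroup of G that is locally compact in the subspace topology. Then S is a closed subgroup of G. -/
/-!
A locally compact subspace `S` of a Hausdorff space is open in its closure: a compact
neighbourhood of a point of `S` is closed in the ambient space. If moreover `S` is a subsemigroup
of a topological group whose closure is a subgroup `H`, then for `h ∈ H` the set `h S⁻¹` is a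
nonempty relatively open subset of `H`, so it meets the dense subset `S`, i.e. `h = s t` with
`s, t ∈ S`. Hence `S = H` is closed.
-/

open Set Topology

theorem IsLocallyClosed.of_locallyCompactSpace {X : Type*} [TopologicalSpace X] [T2Space X]
    {s : Set X} [LocallyCompactSpace s] : IsLocallyClosed s := by
  refine ((isLocallyClosed_tfae s).out 0 3).mpr fun x hx => ?_
  obtain ⟨K, hKc, hK⟩ := exists_compact_mem_nhds (⟨x, hx⟩ : s)
  obtain ⟨u, hu, huK⟩ := mem_nhds_subtype s _ K |>.mp hK
  obtain ⟨V, hVu, hV, hxV⟩ := mem_nhds_iff.mp hu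
  refine ⟨V, hxV, hV, ?_⟩
  calc V ∩ closure s ⊆ closure (V ∩ s) := hV.inter_closure
    _ ⊆ Subtype.val '' K :=
      closure_minimal (fun y ⟨hyV, hys⟩ => ⟨⟨y, hys⟩, huK (hVu hyV), rfl⟩)
        (hKc.image continuous_subtype_val).isClosed
    _ ⊆ s := Subtype.coe_image_subset s K

theorem IsLocallyClosed.isClosed_of_closure_eq_subgroup {G : Type*} [Group G]
    [TopologicalSpace G] [IsTopologicalGroup G] {S : Set G} (hS : IsLocallyClosed S)
    (hmul : ∀ a ∈ S, ∀ b ∈ S, a * b ∈ S) {H : Subgroup G} (hH : closure S = H) :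
    IsClosed S := by
  have hmem (x : G) : x ∈ closure S ↔ x ∈ H := by rw [hH]; rfl
  refine closure_subset_iff_isClosed.mp fun h hh => ?_
  obtain ⟨s, hs⟩ : S.Nonempty := closure_nonempty_iff.mp ⟨1, (hmem 1).mpr H.one_mem⟩
  have hW : IsOpen ((fun g => h * g⁻¹) ⁻¹' coborder S) :=
    hS.isOpen_coborder.preimage (by fun_prop)
  have hsh : s⁻¹ * h ∈ closure S :=
    (hmem _).mpr (H.mul_mem (H.inv_mem ((hmem s).mp (subset_closure hs))) ((hmem h).mp hh))
  obtain ⟨t, htW, ht⟩ := mem_closure_iff.mp hsh _ hW (by simpa using subset_coborder hs)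
  have htH : t ∈ H := (hmem t).mp (subset_closure ht)
  have hht : h * t⁻¹ ∈ S := coborder_inter_closure (s := S) ▸
    ⟨htW, (hmem _).mpr (H.mul_mem ((hmem h).mp hh) (H.inv_mem htH))⟩
  simpa using hmul _ hht _ ht

/-- Any subsemigroup of a Weil-adapted Hausdorff topological group that is
locally compact in the subspace topology is a closed subgroup. -/
theorem stmt_8 {G : Type*} [Group G] [TopologicalSpace G] [IsTopologicalGroup G]
    [T2Space G]
    (hWeil : ∀ S : Set G, S.Nonempty → (∀ a ∈ S, ∀ b ∈ S, a * b ∈ S) →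
      ∃ H : Subgroup G, closure S = (H : Set G))
    (S : Set G) (hne : S.Nonempty) (hmul : ∀ a ∈ S, ∀ b ∈ S, a * b ∈ S)
    (hlc : LocallyCompactSpace S) :
    IsClosed S ∧ ∃ H : Subgroup G, S = (H : Set G) := by
  obtain ⟨H, hH⟩ := hWeil S hne hmul
  have hS : IsClosed S :=
    IsLocallyClosed.of_locallyCompactSpace.isClosed_of_closure_eq_subgroup hmul hH
  exact ⟨hS, H, hS.closure_eq ▸ hH⟩
end

section
/- Every compact Hausdorff topological group is Weil-adapted: for every element g of a compact Hausdorff topological group G, the closure of the set {g, g², g³, …} of positive powers of g is a subgroup of G. -/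
/-!
In a compact group every power `x ^ m`, `m : ℤ`, is a cluster point of the sequence `n ↦ x ^ n`
(`mapClusterPt_self_zpow_atTop_pow`), hence lies in the closure of every tail of that sequence.
So the closure of the positive powers is the closure of the cyclic subgroup generated by `x`.
-/

open Set

theorem closure_pow_image_Ici_eq_topologicalClosure_zpowers {G : Type*} [Group G]
    [TopologicalSpace G] [IsTopologicalGroup G] [CompactSpace G] (x : G) (k : ℕ) :
    closure ((x ^ · : ℕ → G) '' Ici k) = (Subgroup.zpowers x).topologicalClosure := by
  refine (closure_mono ?_).antisymm (closure_minimal ?_ isClosed_closure)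
  · rintro _ ⟨n, -, rfl⟩
    exact Subgroup.npow_mem_zpowers x n
  · rintro _ ⟨m, rfl⟩
    exact mapClusterPt_atTop_iff_forall_mem_closure.1 (mapClusterPt_self_zpow_atTop_pow x m) k

theorem stmt_11_general {G : Type*} [Group G] [TopologicalSpace G] [IsTopologicalGroup G]
    [CompactSpace G] (g : G) :
    ∃ H : Subgroup G, closure {x : G | ∃ n : ℕ, 0 < n ∧ x = g ^ n} = (H : Set G) := by
  have positive_powers : {x : G | ∃ n : ℕ, 0 < n ∧ x = g ^ n} = (g ^ · : ℕ → G) '' Ici 1 := by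
    ext x
    simp only [mem_ofPred_eq, mem_image, mem_Ici, Nat.one_le_iff_ne_zero, Nat.pos_iff_ne_zero,
      eq_comm]
  exact ⟨_, by rw [positive_powers, closure_pow_image_Ici_eq_topologicalClosure_zpowers]⟩

/-- Every compact Hausdorff topological group is Weil-adapted: for each `g`,
the closure of the set of positive powers of `g` is a subgroup. -/
theorem stmt_11 {G : Type*} [Group G] [TopologicalSpace G] [IsTopologicalGroup G]
    [T2Space G] [CompactSpace G] (g : G) :
    ∃ H : Subgroup G, closure {x : G | ∃ n : ℕ, 0 < n ∧ x = g ^ n} = (H : Set G) :=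
  stmt_11_general g
end

section
/- In the circle group 𝕋 = ℝ/ℤ, the image S of the set {m + n√2 : m ∈ ℤ, n ∈ ℕ, n ≥ 1} under the quotient map ℝ → ℝ/ℤ is a subsemigroup of 𝕋 that is not a subgroup of 𝕋. -/
/-! Sums of elements `m + n√2` with `n ≥ 1` again have this form, so `S` is closed under
addition. It is not a subgroup because it misses `0`: `m + n√2` is irrational for `n ≥ 1`,
hence never an integer, i.e. never zero in `ℝ/ℤ`. -/

def intAddPosMul (α : ℝ) : Set ℝ :=
  {x : ℝ | ∃ (m : ℤ) (n : ℕ), 1 ≤ n ∧ x = (m : ℝ) + (n : ℝ) * α}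

theorem add_mem_intAddPosMul {α x y : ℝ} (hx : x ∈ intAddPosMul α) (hy : y ∈ intAddPosMul α) :
    x + y ∈ intAddPosMul α := by
  obtain ⟨m₁, n₁, hn₁, rfl⟩ := hx
  obtain ⟨m₂, n₂, -, rfl⟩ := hy
  exact ⟨m₁ + m₂, n₁ + n₂, hn₁.trans (Nat.le_add_right _ _), by push_cast; ring⟩

theorem Irrational.of_mem_intAddPosMul {α x : ℝ} (hα : Irrational α) (hx : x ∈ intAddPosMul α) :
    Irrational x := by
  obtain ⟨m, n, hn, rfl⟩ := hx
  exact (hα.natCast_mul (by omega : n ≠ 0)).intCast_add m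

theorem add_mem_image_coe_addCircle_of_mem {p : ℝ} {A : Set ℝ}
    (hA : ∀ x ∈ A, ∀ y ∈ A, x + y ∈ A) {a b : AddCircle p}
    (ha : a ∈ ((↑) : ℝ → AddCircle p) '' A) (hb : b ∈ ((↑) : ℝ → AddCircle p) '' A) :
    a + b ∈ ((↑) : ℝ → AddCircle p) '' A := by
  obtain ⟨x, hx, rfl⟩ := ha
  obtain ⟨y, hy, rfl⟩ := hb
  exact ⟨x + y, hA x hx y hy, AddCircle.coe_add p x y⟩

theorem zero_notMem_image_coe_addCircle_one {A : Set ℝ} (hA : ∀ x ∈ A, Irrational x) :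
    (0 : AddCircle (1 : ℝ)) ∉ ((↑) : ℝ → AddCircle (1 : ℝ)) '' A := by
  rintro ⟨x, hx, hx0⟩
  obtain ⟨k, hk⟩ := (AddCircle.coe_eq_zero_iff 1).mp hx0
  exact (hA x hx).ne_int k (by simpa using hk.symm)

/-- In the circle group `𝕋 = ℝ/ℤ`, the image of `{m + n√2 : m ∈ ℤ, n ∈ ℕ, n ≥ 1}`
under the quotient map `ℝ → ℝ/ℤ` is a subsemigroup that is not a subgroup. -/
theorem stmt_14 :
    let S : Set (AddCircle (1 : ℝ)) :=
      (fun x : ℝ => (x : AddCircle (1 : ℝ))) ''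
        {x : ℝ | ∃ (m : ℤ) (n : ℕ), 1 ≤ n ∧ x = (m : ℝ) + (n : ℝ) * Real.sqrt 2}
    S.Nonempty ∧ (∀ a ∈ S, ∀ b ∈ S, a + b ∈ S) ∧
      ¬∃ H : AddSubgroup (AddCircle (1 : ℝ)), S = (H : Set (AddCircle (1 : ℝ))) := by
  intro S
  have hS : S = ((↑) : ℝ → AddCircle (1 : ℝ)) '' intAddPosMul (Real.sqrt 2) := rfl
  rw [hS]
  have hsqrt2 : Real.sqrt 2 ∈ intAddPosMul (Real.sqrt 2) := ⟨0, 1, le_rfl, by simp⟩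
  refine ⟨⟨_, Set.mem_image_of_mem _ hsqrt2⟩, fun a ha b hb =>
    add_mem_image_coe_addCircle_of_mem (fun _ hx _ hy => add_mem_intAddPosMul hx hy) ha hb, ?_⟩
  rintro ⟨H, hH⟩
  exact zero_notMem_image_coe_addCircle_one
    (fun _ => irrational_sqrt_two.of_mem_intAddPosMul) (hH ▸ H.zero_mem)
end
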